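/- arXiv:2108.06974 — 4 statements merged into one kernel-verified Lean document; each statement's English description precedes it below -/
import Mathlib

section
/- There exists η > 0 with the following property. Suppose u₀ : ℝ³ → ℝ⁴ is a bounded measurable function such that u₀(ξ)₁ = u₀(ξ)₂ = u₀(ξ)₃ = 0 for all |ξ| ≤ η, and there exist constants c₀ > 0, s > 0 and M > 0 with |u₀(ξ)₄ − c₀| ≤ M |ξ|^s for all |ξ| ≤ η. Then there exist C₁ > 0 and T > 0 such that for all t ≥ T and for each i ∈ {1, 3}: ( ∫_{|ξ| ≤ η} |(exp(t A₁(|ξ|)) u₀(ξ))ᵢ|² dξ )^{1/2} ≥ C₁ c₀ (1+t)^{−1/4}. -/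
open Matrix MeasureTheory

/-- The Fourier-side Green matrix `A₁(r)` of the linearized two-fluid
Navier–Stokes–Korteweg system. -/
noncomputable def A1 (β₁ β₂ β₃ β₄ σp σm νp νm r : ℝ) : Matrix (Fin 4) (Fin 4) ℝ :=
  !![0, -r, 0, 0;
     β₁ * r + σp * r ^ 3, -νp * r ^ 2, β₂ * r, 0;
     0, 0, 0, -r;
     β₃ * r, 0, β₄ * r + σm * r ^ 3, -νm * r ^ 2]

/-!
For data `(0, 0, 0, c)` write the solution of `x' = A₁(r) x` as `x = (a, u, b, w)`. The energy
`(β₁ + σ⁺r²) a² + 2β₂ a b + (β₄ + σ⁻r²) b² + u² + w²` is nonincreasing, and since `β₁β₄ = β₂²`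
it bounds both the velocities and the acoustic mode `β₁ a + β₂ b` by `c`. The fraction mode
`P = β₂ a - β₁ b` has `P' = -r q` with `q = β₂ u - β₁ w`, and `q' = O(r²)`; so while `r² t` is
small, `q ≈ -β₁ c` and `P` grows like `β₁ c r t`. Both densities are then of size `c r t ≈ c √t`
on the shell `|ξ| ≈ t^{-1/2}`, whose volume is `≈ t^{-3/2}`, and the integral is `≳ c₀² t^{-1/2}`.
-/

section MatrixExp

attribute [local instance] Matrix.linftyOpNormedAddCommGroup Matrix.linftyOpNormedRing
  Matrix.linftyOpNormedAlgebra

variable {n : Type*} [Fintype n] [DecidableEq n]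

theorem Matrix.hasDerivAt_exp_smul_mulVec (A : Matrix n n ℝ) (v : n → ℝ) (t : ℝ) :
    HasDerivAt (fun τ : ℝ => NormedSpace.exp (τ • A) *ᵥ v)
      (A *ᵥ (NormedSpace.exp (t • A) *ᵥ v)) t := by
  let L : Matrix n n ℝ →L[ℝ] n → ℝ :=
    ((LinearMap.applyₗ v).comp Matrix.toLin'.toLinearMap).toContinuousLinearMap
  have h := L.hasFDerivAt.comp_hasDerivAt t (hasDerivAt_exp_smul_const' A t)
  rw [show A *ᵥ (NormedSpace.exp (t • A) *ᵥ v) = L (A * NormedSpace.exp (t • A)) by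
    simp [L, mulVec_mulVec]]
  exact h

theorem Matrix.continuous_exp : Continuous (NormedSpace.exp : Matrix n n ℝ → Matrix n n ℝ) :=
  NormedSpace.exp_continuous

end MatrixExp

theorem Continuous.measurable_mulVec {α m n : Type*} [Fintype n] [TopologicalSpace α]
    [MeasurableSpace α] [OpensMeasurableSpace α] {M : α → Matrix m n ℝ} (hM : Continuous M)
    {u : α → n → ℝ} (hu : Measurable u) : Measurable fun a => M a *ᵥ u a :=
  measurable_pi_lambda _ fun i => Finset.measurable_sum _ fun j _ =>
    ((continuous_apply j).comp ((continuous_apply i).comp hM)).measurable.mul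
      ((measurable_pi_apply j).comp hu)

theorem abs_sub_le_mul_of_abs_deriv_le {f f' : ℝ → ℝ} {C t : ℝ}
    (hf : ∀ τ, HasDerivAt f (f' τ) τ) (hC : ∀ τ ∈ Set.Ico 0 t, |f' τ| ≤ C) (ht : 0 ≤ t) :
    |f t - f 0| ≤ C * t := by
  simpa using norm_image_sub_le_of_norm_deriv_le_segment'
    (fun τ _ => (hf τ).hasDerivWithinAt) hC t ⟨ht, le_rfl⟩

theorem mul_le_sub_of_le_deriv {f f' : ℝ → ℝ} {C t : ℝ}
    (hf : ∀ τ, HasDerivAt f (f' τ) τ) (hC : ∀ τ ∈ Set.Icc 0 t, C ≤ f' τ) (ht : 0 ≤ t) :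
    C * t ≤ f t - f 0 := by
  have hdiff : Differentiable ℝ f := fun τ => (hf τ).differentiableAt
  simpa using (convex_Icc 0 t).mul_sub_le_image_sub_of_le_deriv hdiff.continuous.continuousOn
    hdiff.differentiableOn (fun τ hτ => (hf τ).deriv ▸ hC τ (interior_subset hτ))
    0 ⟨le_rfl, ht⟩ t ⟨ht, le_rfl⟩ ht

theorem MeasureTheory.mul_measureReal_le_setIntegral {α : Type*} [MeasurableSpace α]
    {μ : Measure α} {f : α → ℝ} {s t : Set α} {m : ℝ} (hst : s ⊆ t) (hs : MeasurableSet s)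
    (hμs : μ s ≠ ⊤) (hf : IntegrableOn f t μ) (hf₀ : 0 ≤ f) (hm : ∀ x ∈ s, m ≤ f x) :
    m * μ.real s ≤ ∫ x in t, f x ∂μ := by
  rw [mul_comm, ← smul_eq_mul]
  exact (setIntegral_ge_of_const_le hs hμs hm (hf.mono_set hst)).trans
    (setIntegral_mono_set hf (.of_forall hf₀) hst.eventuallyLE)

section Measure

open Metric

variable {E : Type*} [NormedAddCommGroup E] [NormedSpace ℝ E] [MeasurableSpace E] [BorelSpace E]
  [FiniteDimensional ℝ E] [Nontrivial E] (μ : Measure E) [μ.IsAddHaarMeasure]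

theorem MeasureTheory.Measure.addHaar_real_closedBall_sdiff_ball (x : E) {r R : ℝ} (hr : 0 ≤ r)
    (hrR : r ≤ R) :
    μ.real (closedBall x R \ ball x r)
      = (R ^ Module.finrank ℝ E - r ^ Module.finrank ℝ E) * μ.real (ball 0 1) := by
  rw [measureReal_sdiff (ball_subset_closedBall.trans (closedBall_subset_closedBall hrR))
      measurableSet_ball measure_closedBall_lt_top.ne,
    ← addHaar_real_closedBall_eq_addHaar_real_ball, addHaar_real_closedBall μ x (hr.trans hrR),
    addHaar_real_closedBall μ x hr]
  ring

theorem MeasureTheory.mul_measureReal_annulus_le_setIntegral {f : E → ℝ} {b R m : ℝ}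
    (hf : IntegrableOn f (closedBall 0 R) μ) (hf₀ : 0 ≤ f) (hb : 0 ≤ b) (hbR : 2 * b ≤ R)
    (hm : ∀ x, b ≤ ‖x‖ → ‖x‖ ≤ 2 * b → m ≤ f x) :
    m * ((2 ^ Module.finrank ℝ E - 1) * b ^ Module.finrank ℝ E * μ.real (ball 0 1))
      ≤ ∫ x in closedBall 0 R, f x ∂μ := by
  have hsub : closedBall (0 : E) (2 * b) \ ball 0 b ⊆ closedBall 0 R :=
    Set.sdiff_subset.trans (closedBall_subset_closedBall hbR)
  calc m * ((2 ^ Module.finrank ℝ E - 1) * b ^ Module.finrank ℝ E * μ.real (ball 0 1))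
      = m * μ.real (closedBall (0 : E) (2 * b) \ ball 0 b) := by
        rw [Measure.addHaar_real_closedBall_sdiff_ball μ 0 hb (by linarith)]
        ring
    _ ≤ _ := mul_measureReal_le_setIntegral hsub (measurableSet_closedBall.diff measurableSet_ball)
        (measure_lt_top_of_subset hsub measure_closedBall_lt_top.ne).ne hf hf₀
        fun x hx => by
          simp only [Set.mem_sdiff, mem_closedBall_zero_iff, mem_ball_zero_iff, not_lt] at hx
          exact hm x hx.2 hx.1

end Measure

theorem exists_pos_half_le_of_abs_sub_le_rpow {E : Type*} [SeminormedAddGroup E] {f : E → ℝ}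
    {c₀ s M R : ℝ} (hc₀ : 0 < c₀) (hs : 0 < s) (hM : 0 < M) (hR : 0 < R)
    (hf : ∀ ξ, ‖ξ‖ ≤ R → |f ξ - c₀| ≤ M * ‖ξ‖ ^ s) :
    ∃ ρ > 0, ρ ≤ R ∧ ∀ ξ, ‖ξ‖ ≤ ρ → c₀ / 2 ≤ f ξ := by
  refine ⟨min ((c₀ / 2 / M) ^ s⁻¹) R, by positivity, min_le_right _ _, fun ξ hξ => ?_⟩
  have hsmall : M * ‖ξ‖ ^ s ≤ c₀ / 2 :=
    calc M * ‖ξ‖ ^ s ≤ M * ((c₀ / 2 / M) ^ s⁻¹) ^ s := by gcongr; exact hξ.trans (min_le_left _ _)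
      _ = c₀ / 2 := by rw [← Real.rpow_mul (by positivity), inv_mul_cancel₀ hs.ne',
        Real.rpow_one, mul_div_cancel₀ _ hM.ne']
  linarith [(abs_le.mp ((hf ξ (hξ.trans (min_le_right _ _))).trans hsmall)).1]

theorem mul_rpow_neg_quarter_le_sqrt {C c t I : ℝ} (hC : 0 ≤ C) (ht : 0 < t)
    (hI : C * c ^ 2 / √t ≤ I) : √C * c * (1 + t) ^ (-(1 / 4 : ℝ)) ≤ √I := by
  have hquarter : ((1 + t) ^ (-(1 / 4 : ℝ))) ^ 2 ≤ (√t)⁻¹ := by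
    rw [← Real.rpow_natCast, ← Real.rpow_mul (by positivity), Real.sqrt_eq_rpow,
      ← Real.rpow_neg ht.le, show -(1 / 4 : ℝ) * (2 : ℕ) = -(1 / 2) by norm_num]
    exact Real.rpow_le_rpow_of_nonpos ht (by linarith) (by norm_num)
  apply Real.le_sqrt_of_sq_le
  calc (√C * c * (1 + t) ^ (-(1 / 4 : ℝ))) ^ 2
      = C * c ^ 2 * ((1 + t) ^ (-(1 / 4 : ℝ))) ^ 2 := by rw [mul_pow, mul_pow, Real.sq_sqrt hC]
    _ ≤ C * c ^ 2 * (√t)⁻¹ := by gcongr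
    _ ≤ I := by rwa [← div_eq_mul_inv]

theorem div_sqrt_le_of_div_sq_le {a ρ t : ℝ} (ha : 0 < a) (hρ : 0 < ρ) (h : (a / ρ) ^ 2 ≤ t) :
    a / √t ≤ ρ := by
  have h' := Real.le_sqrt_of_sq_le h
  rw [div_le_iff₀ hρ] at h'
  rw [div_le_iff₀ (by nlinarith), mul_comm]
  exact h'

theorem continuous_A1 (β₁ β₂ β₃ β₄ σp σm νp νm : ℝ) :
    Continuous (A1 β₁ β₂ β₃ β₄ σp σm νp νm) := by
  unfold A1
  fun_prop

theorem A1_mulVec (β₁ β₂ β₃ β₄ σp σm νp νm r : ℝ) (y : Fin 4 → ℝ) :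
    A1 β₁ β₂ β₃ β₄ σp σm νp νm r *ᵥ y =
      ![-r * y 1,
        (β₁ * r + σp * r ^ 3) * y 0 - νp * r ^ 2 * y 1 + β₂ * r * y 2,
        -r * y 3,
        β₃ * r * y 0 + (β₄ * r + σm * r ^ 3) * y 2 - νm * r ^ 2 * y 3] := by
  ext i
  fin_cases i <;> simp [A1, mulVec, dotProduct, Fin.sum_univ_four] <;> ring

namespace A1

variable {β₁ β₂ β₄ σp σm νp νm r c : ℝ} {x : ℝ → Fin 4 → ℝ}

def energy (β₁ β₂ β₄ σp σm r : ℝ) (y : Fin 4 → ℝ) : ℝ :=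
  (β₁ + σp * r ^ 2) * y 0 ^ 2 + 2 * β₂ * y 0 * y 2 + (β₄ + σm * r ^ 2) * y 2 ^ 2
    + y 1 ^ 2 + y 3 ^ 2

def acousticMode (β₁ β₂ : ℝ) (y : Fin 4 → ℝ) : ℝ := β₁ * y 0 + β₂ * y 2

def fractionMode (β₁ β₂ : ℝ) (y : Fin 4 → ℝ) : ℝ := β₂ * y 0 - β₁ * y 2

def fractionFlux (β₁ β₂ : ℝ) (y : Fin 4 → ℝ) : ℝ := β₂ * y 1 - β₁ * y 3

theorem mul_energy_eq (hββ : β₁ * β₄ = β₂ ^ 2) (y : Fin 4 → ℝ) :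
    β₁ * energy β₁ β₂ β₄ σp σm r y = acousticMode β₁ β₂ y ^ 2
      + β₁ * (σp * r ^ 2 * y 0 ^ 2 + σm * r ^ 2 * y 2 ^ 2 + y 1 ^ 2 + y 3 ^ 2) := by
  unfold energy acousticMode
  linear_combination y 2 ^ 2 * hββ

theorem sq_acousticMode_le (hβ₁ : 0 < β₁) (hββ : β₁ * β₄ = β₂ ^ 2) (hσp : 0 ≤ σp)
    (hσm : 0 ≤ σm) (y : Fin 4 → ℝ) :
    acousticMode β₁ β₂ y ^ 2 ≤ β₁ * energy β₁ β₂ β₄ σp σm r y := by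
  rw [mul_energy_eq hββ]
  have : 0 ≤ σp * r ^ 2 * y 0 ^ 2 + σm * r ^ 2 * y 2 ^ 2 + y 1 ^ 2 + y 3 ^ 2 := by positivity
  nlinarith

theorem sq_add_sq_le_energy (hβ₁ : 0 < β₁) (hββ : β₁ * β₄ = β₂ ^ 2) (hσp : 0 ≤ σp)
    (hσm : 0 ≤ σm) (y : Fin 4 → ℝ) :
    y 1 ^ 2 + y 3 ^ 2 ≤ energy β₁ β₂ β₄ σp σm r y := by
  have h := mul_energy_eq (σp := σp) (σm := σm) (r := r) hββ y
  have : 0 ≤ σp * r ^ 2 * y 0 ^ 2 + σm * r ^ 2 * y 2 ^ 2 := by positivity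
  nlinarith [sq_nonneg (acousticMode β₁ β₂ y)]

theorem hasDerivAt_coords (hx : ∀ τ, HasDerivAt x (A1 β₁ β₂ β₂ β₄ σp σm νp νm r *ᵥ x τ) τ)
    (τ : ℝ) :
    HasDerivAt (fun s => x s 0) (-r * x τ 1) τ ∧
    HasDerivAt (fun s => x s 1)
      ((β₁ * r + σp * r ^ 3) * x τ 0 - νp * r ^ 2 * x τ 1 + β₂ * r * x τ 2) τ ∧
    HasDerivAt (fun s => x s 2) (-r * x τ 3) τ ∧
    HasDerivAt (fun s => x s 3)
      (β₂ * r * x τ 0 + (β₄ * r + σm * r ^ 3) * x τ 2 - νm * r ^ 2 * x τ 3) τ := by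
  have h := fun i => hasDerivAt_pi.mp (hx τ) i
  simp only [A1_mulVec] at h
  exact ⟨h 0, h 1, h 2, h 3⟩

theorem hasDerivAt_energy (hx : ∀ τ, HasDerivAt x (A1 β₁ β₂ β₂ β₄ σp σm νp νm r *ᵥ x τ) τ)
    (τ : ℝ) :
    HasDerivAt (fun s => energy β₁ β₂ β₄ σp σm r (x s))
      (-2 * r ^ 2 * (νp * x τ 1 ^ 2 + νm * x τ 3 ^ 2)) τ := by
  obtain ⟨h0, h1, h2, h3⟩ := hasDerivAt_coords hx τ
  have h := ((((h0.pow 2).const_mul (β₁ + σp * r ^ 2)).add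
    (((h0.const_mul (2 * β₂)).mul h2))).add ((h2.pow 2).const_mul (β₄ + σm * r ^ 2))).add
    (h1.pow 2) |>.add (h3.pow 2)
  exact h.congr_deriv (by push_cast; ring)

theorem energy_antitone (hνp : 0 ≤ νp) (hνm : 0 ≤ νm)
    (hx : ∀ τ, HasDerivAt x (A1 β₁ β₂ β₂ β₄ σp σm νp νm r *ᵥ x τ) τ) :
    Antitone fun τ => energy β₁ β₂ β₄ σp σm r (x τ) :=
  antitone_of_hasDerivAt_nonpos (hasDerivAt_energy hx) fun τ => by
    have : 0 ≤ r ^ 2 * (νp * x τ 1 ^ 2 + νm * x τ 3 ^ 2) := by positivity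
    simp only [Pi.zero_apply]; linarith

theorem energy_le (hνp : 0 ≤ νp) (hνm : 0 ≤ νm)
    (hx : ∀ τ, HasDerivAt x (A1 β₁ β₂ β₂ β₄ σp σm νp νm r *ᵥ x τ) τ)
    (hx0 : x 0 = ![0, 0, 0, c]) {τ : ℝ} (hτ : 0 ≤ τ) :
    energy β₁ β₂ β₄ σp σm r (x τ) ≤ c ^ 2 := by
  simpa [hx0, energy] using energy_antitone hνp hνm hx hτ

theorem abs_velocity_le (hβ₁ : 0 < β₁) (hββ : β₁ * β₄ = β₂ ^ 2) (hσp : 0 ≤ σp) (hσm : 0 ≤ σm)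
    (hνp : 0 ≤ νp) (hνm : 0 ≤ νm)
    (hx : ∀ τ, HasDerivAt x (A1 β₁ β₂ β₂ β₄ σp σm νp νm r *ᵥ x τ) τ)
    (hx0 : x 0 = ![0, 0, 0, c]) {τ : ℝ} (hτ : 0 ≤ τ) :
    |x τ 1| ≤ |c| ∧ |x τ 3| ≤ |c| := by
  have h := (sq_add_sq_le_energy hβ₁ hββ hσp hσm (x τ)).trans (energy_le hνp hνm hx hx0 hτ)
  constructor <;> apply sq_le_sq.mp <;> nlinarith [sq_nonneg (x τ 1), sq_nonneg (x τ 3)]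

theorem sq_acousticMode_le_sq (hβ₁ : 0 < β₁) (hββ : β₁ * β₄ = β₂ ^ 2) (hσp : 0 ≤ σp)
    (hσm : 0 ≤ σm) (hνp : 0 ≤ νp) (hνm : 0 ≤ νm)
    (hx : ∀ τ, HasDerivAt x (A1 β₁ β₂ β₂ β₄ σp σm νp νm r *ᵥ x τ) τ)
    (hx0 : x 0 = ![0, 0, 0, c]) {τ : ℝ} (hτ : 0 ≤ τ) :
    acousticMode β₁ β₂ (x τ) ^ 2 ≤ β₁ * c ^ 2 :=
  (sq_acousticMode_le hβ₁ hββ hσp hσm (x τ)).trans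
    (mul_le_mul_of_nonneg_left (energy_le hνp hνm hx hx0 hτ) hβ₁.le)

theorem abs_density_le (hβ₁ : 0 < β₁) (hββ : β₁ * β₄ = β₂ ^ 2) (hσp : 0 ≤ σp) (hσm : 0 ≤ σm)
    (hνp : 0 ≤ νp) (hνm : 0 ≤ νm) (hr : 0 ≤ r)
    (hx : ∀ τ, HasDerivAt x (A1 β₁ β₂ β₂ β₄ σp σm νp νm r *ᵥ x τ) τ)
    (hx0 : x 0 = ![0, 0, 0, c]) {τ : ℝ} (hτ : 0 ≤ τ) :
    |x τ 0| ≤ r * |c| * τ ∧ |x τ 2| ≤ r * |c| * τ := by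
  have hv := fun s (hs : s ∈ Set.Ico 0 τ) => abs_velocity_le hβ₁ hββ hσp hσm hνp hνm hx hx0 hs.1
  have hdensity : ∀ j l : Fin 4, (∀ s, HasDerivAt (fun s => x s j) (-r * x s l) s) → x 0 j = 0 →
      (∀ s ∈ Set.Ico 0 τ, |x s l| ≤ |c|) → |x τ j| ≤ r * |c| * τ := fun j l hd h0 hl => by
    simpa [h0] using abs_sub_le_mul_of_abs_deriv_le hd (fun s hs => by
      rw [abs_mul, abs_neg, abs_of_nonneg hr]; exact mul_le_mul_of_nonneg_left (hl s hs) hr) hτ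
  exact ⟨hdensity 0 1 (fun s => (hasDerivAt_coords hx s).1) (by simp [hx0]) fun s hs => (hv s hs).1,
    hdensity 2 3 (fun s => (hasDerivAt_coords hx s).2.2.1) (by simp [hx0]) fun s hs => (hv s hs).2⟩

theorem hasDerivAt_fractionFlux (hββ : β₁ * β₄ = β₂ ^ 2)
    (hx : ∀ τ, HasDerivAt x (A1 β₁ β₂ β₂ β₄ σp σm νp νm r *ᵥ x τ) τ) (τ : ℝ) :
    HasDerivAt (fun s => fractionFlux β₁ β₂ (x s))
      (r ^ 2 * (σp * β₂ * r * x τ 0 - σm * β₁ * r * x τ 2 - νp * β₂ * x τ 1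
        + νm * β₁ * x τ 3)) τ := by
  obtain ⟨-, h1, -, h3⟩ := hasDerivAt_coords hx τ
  exact ((h1.const_mul β₂).sub (h3.const_mul β₁)).congr_deriv
    (by linear_combination -(r * x τ 2) * hββ)

theorem abs_fractionFlux_add_le (hβ₁ : 0 < β₁) (hβ₂ : 0 < β₂) (hββ : β₁ * β₄ = β₂ ^ 2)
    (hσp : 0 ≤ σp) (hσm : 0 ≤ σm) (hνp : 0 ≤ νp) (hνm : 0 ≤ νm) (hr : 0 ≤ r)
    (hx : ∀ τ, HasDerivAt x (A1 β₁ β₂ β₂ β₄ σp σm νp νm r *ᵥ x τ) τ)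
    (hx0 : x 0 = ![0, 0, 0, c]) {t : ℝ} (ht : 0 ≤ t) (hrt : r ^ 2 * t ≤ 1) :
    |fractionFlux β₁ β₂ (x t) + β₁ * c|
      ≤ (σp * β₂ + σm * β₁ + νp * β₂ + νm * β₁) * r ^ 2 * |c| * t := by
  have hbound : ∀ s ∈ Set.Ico 0 t,
      |r ^ 2 * (σp * β₂ * r * x s 0 - σm * β₁ * r * x s 2 - νp * β₂ * x s 1 + νm * β₁ * x s 3)|
        ≤ (σp * β₂ + σm * β₁ + νp * β₂ + νm * β₁) * r ^ 2 * |c| := by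
    intro s ⟨hs, hst⟩
    obtain ⟨h0, h2⟩ := abs_density_le hβ₁ hββ hσp hσm hνp hνm hr hx hx0 hs
    obtain ⟨h1, h3⟩ := abs_velocity_le hβ₁ hββ hσp hσm hνp hνm hx hx0 hs
    have hrs : r ^ 2 * s ≤ 1 := by nlinarith
    have hr0 : |r * x s 0| ≤ |c| := by
      rw [abs_mul, abs_of_nonneg hr]; nlinarith [mul_le_mul_of_nonneg_left h0 hr, abs_nonneg c]
    have hr2 : |r * x s 2| ≤ |c| := by
      rw [abs_mul, abs_of_nonneg hr]; nlinarith [mul_le_mul_of_nonneg_left h2 hr, abs_nonneg c]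
    have hterm : ∀ α z : ℝ, 0 ≤ α → |z| ≤ |c| → -(α * |c|) ≤ α * z ∧ α * z ≤ α * |c| :=
      fun α z hα hz => ⟨by nlinarith [(abs_le.mp hz).1], by nlinarith [(abs_le.mp hz).2]⟩
    obtain ⟨l0, u0⟩ := hterm (σp * β₂) _ (by positivity) hr0
    obtain ⟨l2, u2⟩ := hterm (σm * β₁) _ (by positivity) hr2
    obtain ⟨l1, u1⟩ := hterm (νp * β₂) _ (by positivity) h1
    obtain ⟨l3, u3⟩ := hterm (νm * β₁) _ (by positivity) h3
    rw [abs_mul, abs_of_nonneg (sq_nonneg r), mul_right_comm _ (r ^ 2), mul_comm _ (r ^ 2)]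
    refine mul_le_mul_of_nonneg_left (abs_le.mpr ⟨?_, ?_⟩) (sq_nonneg r) <;> linarith
  simpa [hx0, fractionFlux] using
    abs_sub_le_mul_of_abs_deriv_le (hasDerivAt_fractionFlux hββ hx) hbound ht

theorem fractionMode_ge (hβ₁ : 0 < β₁) (hβ₂ : 0 < β₂) (hββ : β₁ * β₄ = β₂ ^ 2)
    (hσp : 0 ≤ σp) (hσm : 0 ≤ σm) (hνp : 0 ≤ νp) (hνm : 0 ≤ νm) (hr : 0 ≤ r) (hc : 0 ≤ c)
    (hx : ∀ τ, HasDerivAt x (A1 β₁ β₂ β₂ β₄ σp σm νp νm r *ᵥ x τ) τ)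
    (hx0 : x 0 = ![0, 0, 0, c]) {t : ℝ} (ht : 0 ≤ t) (hrt : r ^ 2 * t ≤ 1)
    (hsmall : 2 * (σp * β₂ + σm * β₁ + νp * β₂ + νm * β₁) * r ^ 2 * t ≤ β₁) :
    β₁ * c * r / 2 * t ≤ fractionMode β₁ β₂ (x t) := by
  have hflux : ∀ s ∈ Set.Icc 0 t, fractionFlux β₁ β₂ (x s) ≤ -(β₁ * c / 2) := by
    intro s ⟨hs, hst⟩
    have h := (abs_le.mp (abs_fractionFlux_add_le hβ₁ hβ₂ hββ hσp hσm hνp hνm hr hx hx0 hs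
      (by nlinarith))).2
    rw [abs_of_nonneg hc] at h
    have : (σp * β₂ + σm * β₁ + νp * β₂ + νm * β₁) * r ^ 2 * c * s ≤ β₁ * c / 2 := by
      nlinarith [mul_le_mul_of_nonneg_left hst (by positivity :
        0 ≤ (σp * β₂ + σm * β₁ + νp * β₂ + νm * β₁) * r ^ 2 * c)]
    linarith
  have hmode : ∀ τ, HasDerivAt (fun s => fractionMode β₁ β₂ (x s))
      (-r * fractionFlux β₁ β₂ (x τ)) τ := fun τ => by
    obtain ⟨h0, -, h2, -⟩ := hasDerivAt_coords hx τ
    exact ((h0.const_mul β₂).sub (h2.const_mul β₁)).congr_deriv (by unfold fractionFlux; ring)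
  simpa [hx0, fractionMode] using mul_le_sub_of_le_deriv hmode
    (fun s hs => by nlinarith [mul_le_mul_of_nonneg_left (hflux s hs) hr]) ht

theorem density_ge_of_modes (hβ₁ : 0 ≤ β₁) (hβ₂ : 0 ≤ β₂) {y : Fin 4 → ℝ} {p w : ℝ}
    (hp : p ≤ fractionMode β₁ β₂ y) (hw : |acousticMode β₁ β₂ y| ≤ w) :
    β₂ * p - β₁ * w ≤ (β₁ ^ 2 + β₂ ^ 2) * |y 0| ∧
      β₁ * p - β₂ * w ≤ (β₁ ^ 2 + β₂ ^ 2) * |y 2| := by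
  unfold fractionMode at hp
  unfold acousticMode at hw
  obtain ⟨hw₁, hw₂⟩ := abs_le.mp hw
  have h0 := le_abs_self (y 0)
  have h2 := neg_abs_le (y 2)
  constructor <;> nlinarith [mul_le_mul_of_nonneg_left hp hβ₁, mul_le_mul_of_nonneg_left hp hβ₂,
    mul_le_mul_of_nonneg_left hw₁ hβ₁, mul_le_mul_of_nonneg_left hw₂ hβ₂,
    mul_le_mul_of_nonneg_left h0 (by positivity : 0 ≤ β₁ ^ 2 + β₂ ^ 2),
    mul_le_mul_of_nonneg_left h2 (by positivity : 0 ≤ β₁ ^ 2 + β₂ ^ 2)]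

noncomputable def flow (β₁ β₂ β₄ σp σm νp νm r : ℝ) (v : Fin 4 → ℝ) (t : ℝ) : Fin 4 → ℝ :=
  NormedSpace.exp (t • A1 β₁ β₂ β₂ β₄ σp σm νp νm r) *ᵥ v

theorem hasDerivAt_flow (v : Fin 4 → ℝ) (t : ℝ) :
    HasDerivAt (flow β₁ β₂ β₄ σp σm νp νm r v)
      (A1 β₁ β₂ β₂ β₄ σp σm νp νm r *ᵥ flow β₁ β₂ β₄ σp σm νp νm r v t) t :=
  Matrix.hasDerivAt_exp_smul_mulVec _ v t

theorem flow_zero {v : Fin 4 → ℝ} (h0 : v 0 = 0) (h1 : v 1 = 0) (h2 : v 2 = 0) :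
    flow β₁ β₂ β₄ σp σm νp νm r v 0 = ![0, 0, 0, v 3] := by
  ext i
  fin_cases i <;> simp [flow, NormedSpace.exp_zero, *]

theorem abs_flow_le (hβ₁ : 0 < β₁) (hββ : β₁ * β₄ = β₂ ^ 2) (hσp : 0 ≤ σp) (hσm : 0 ≤ σm)
    (hνp : 0 ≤ νp) (hνm : 0 ≤ νm) (hr : 0 ≤ r) {v : Fin 4 → ℝ} (h0 : v 0 = 0) (h1 : v 1 = 0)
    (h2 : v 2 = 0) {t : ℝ} (ht : 0 ≤ t) :
    |flow β₁ β₂ β₄ σp σm νp νm r v t 0| ≤ r * |v 3| * t ∧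
      |flow β₁ β₂ β₄ σp σm νp νm r v t 2| ≤ r * |v 3| * t :=
  abs_density_le hβ₁ hββ hσp hσm hνp hνm hr (hasDerivAt_flow v) (flow_zero h0 h1 h2) ht

theorem exists_abs_flow_ge (hβ₁ : 0 < β₁) (hβ₂ : 0 < β₂) (hββ : β₁ * β₄ = β₂ ^ 2)
    (hσp : 0 ≤ σp) (hσm : 0 ≤ σm) (hνp : 0 ≤ νp) (hνm : 0 ≤ νm) :
    ∃ ε > 0, ∃ L, ∃ k > 0, ∀ (r t : ℝ) (v : Fin 4 → ℝ), 0 ≤ r → 0 ≤ t →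
      v 0 = 0 → v 1 = 0 → v 2 = 0 → 0 ≤ v 3 → r ^ 2 * t ≤ ε → L ≤ r * t →
      ∀ i : Fin 4, i = 0 ∨ i = 2 → k * v 3 * (r * t) ≤ |flow β₁ β₂ β₄ σp σm νp νm r v t i| := by
  set K := σp * β₂ + σm * β₁ + νp * β₂ + νm * β₁
  -- `ε` keeps the drift `2 K r² t` of the fraction flux below `β₁`; `L` lets the fraction mode
  -- outweigh the acoustic mode, which stays below `√β₁ v₃`, in both densities.
  refine ⟨min 1 (β₁ / (2 * K + 1)), by positivity, 4 * √β₁ * (1 / β₂ + β₂ / β₁ ^ 2),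
    β₁ * min β₁ β₂ / (4 * (β₁ ^ 2 + β₂ ^ 2)), by positivity, ?_⟩
  intro r t v hr ht h0 h1 h2 hc hε hL i hi
  have hsmall : 2 * K * r ^ 2 * t ≤ β₁ := by
    have := (le_div_iff₀ (by positivity)).mp (hε.trans (min_le_right _ _))
    nlinarith [mul_nonneg hr ht]
  have hP := fractionMode_ge hβ₁ hβ₂ hββ hσp hσm hνp hνm hr hc (hasDerivAt_flow v)
    (flow_zero h0 h1 h2) ht (hε.trans (min_le_left _ _)) hsmall
  have hW : |acousticMode β₁ β₂ (flow β₁ β₂ β₄ σp σm νp νm r v t)| ≤ √β₁ * v 3 := by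
    rw [← Real.sqrt_sq hc, ← Real.sqrt_mul hβ₁.le]
    exact Real.abs_le_sqrt (sq_acousticMode_le_sq hβ₁ hββ hσp hσm hνp hνm (hasDerivAt_flow v)
      (flow_zero h0 h1 h2) ht)
  obtain ⟨hd0, hd2⟩ := density_ge_of_modes hβ₁.le hβ₂.le hP hW
  have hs := Real.sqrt_nonneg β₁
  have hL₀ : 4 * √β₁ ≤ β₂ * (r * t) := by
    have : 4 * √β₁ * (1 / β₂) ≤ r * t := by
      refine le_trans ?_ hL; gcongr; exact le_add_of_nonneg_right (by positivity)
    rw [mul_one_div, div_le_iff₀ hβ₂] at this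
    linarith
  have hL₂ : 4 * √β₁ * β₂ ≤ β₁ ^ 2 * (r * t) := by
    have : 4 * √β₁ * (β₂ / β₁ ^ 2) ≤ r * t := by
      refine le_trans ?_ hL; gcongr; exact le_add_of_nonneg_left (by positivity)
    rw [mul_div_assoc', div_le_iff₀ (by positivity)] at this
    linarith
  have hm₁ := min_le_left β₁ β₂
  have hm₂ := min_le_right β₁ β₂
  rw [div_mul_eq_mul_div, div_mul_eq_mul_div, div_le_iff₀ (by positivity)]
  rcases hi with rfl | rfl
  · nlinarith [mul_le_mul_of_nonneg_left hL₀ (by positivity : 0 ≤ β₁ * v 3),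
      mul_le_mul_of_nonneg_right hm₂ (by positivity : 0 ≤ β₁ * v 3 * (r * t))]
  · nlinarith [mul_le_mul_of_nonneg_left hL₂ (by positivity : 0 ≤ v 3),
      mul_le_mul_of_nonneg_right hm₁ (by positivity : 0 ≤ β₁ * v 3 * (r * t))]

theorem exists_abs_flow_ge_of_mem_shell (hβ₁ : 0 < β₁) (hβ₂ : 0 < β₂) (hββ : β₁ * β₄ = β₂ ^ 2)
    (hσp : 0 ≤ σp) (hσm : 0 ≤ σm) (hνp : 0 ≤ νp) (hνm : 0 ≤ νm) :
    ∃ a > 0, ∃ T₀ > 0, ∃ k > 0, ∀ t, T₀ ≤ t → ∀ r, a / √t ≤ r → r ≤ 2 * (a / √t) →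
      ∀ v : Fin 4 → ℝ, v 0 = 0 → v 1 = 0 → v 2 = 0 → 0 ≤ v 3 → ∀ i : Fin 4, i = 0 ∨ i = 2 →
        k * v 3 * (a * √t) ≤ |flow β₁ β₂ β₄ σp σm νp νm r v t i| := by
  obtain ⟨ε, hε, L, k, hk, hflow⟩ := exists_abs_flow_ge hβ₁ hβ₂ hββ hσp hσm hνp hνm
  set a := √ε / 2
  have ha : 0 < a := by positivity
  refine ⟨a, ha, (L / a) ^ 2 + 1, by positivity, k, hk,
    fun t hT r hr₁ hr₂ v h0 h1 h2 hv i hi => ?_⟩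
  have ht : 0 < t := (by positivity : 0 < (L / a) ^ 2 + 1).trans_le hT
  have hst : 0 < √t := Real.sqrt_pos.mpr ht
  have hr : 0 ≤ r := (by positivity : 0 ≤ a / √t).trans hr₁
  rw [div_le_iff₀ hst] at hr₁
  rw [← mul_div_assoc, le_div_iff₀ hst] at hr₂
  have hε' : r ^ 2 * t ≤ ε := by
    have : (r * √t) ^ 2 ≤ (2 * a) ^ 2 := by gcongr
    rwa [mul_pow, Real.sq_sqrt ht.le, mul_div_cancel₀ _ two_ne_zero,
      Real.sq_sqrt hε.le] at this
  have hrt : a * √t ≤ r * t := by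
    simpa only [mul_assoc, Real.mul_self_sqrt ht.le] using
      mul_le_mul_of_nonneg_right hr₁ hst.le
  have hL : L ≤ a * √t := by
    have := Real.le_sqrt_of_sq_le (by linarith : (L / a) ^ 2 ≤ t)
    rwa [div_le_iff₀ ha, mul_comm] at this
  calc k * v 3 * (a * √t) ≤ k * v 3 * (r * t) := by gcongr
    _ ≤ _ := hflow r t v hr ht.le h0 h1 h2 hv hε' (hL.trans hrt) i hi

theorem measurable_flow {E : Type*} [NormedAddCommGroup E] [MeasurableSpace E]
    [OpensMeasurableSpace E] {u₀ : E → Fin 4 → ℝ} (hu₀ : Measurable u₀) (t : ℝ) :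
    Measurable fun ξ => flow β₁ β₂ β₄ σp σm νp νm ‖ξ‖ (u₀ ξ) t :=
  (Matrix.continuous_exp.comp
    (((continuous_A1 _ _ _ _ _ _ _ _).comp continuous_norm).const_smul t)).measurable_mulVec hu₀

theorem integrableOn_sq_flow (hβ₁ : 0 < β₁) (hββ : β₁ * β₄ = β₂ ^ 2) (hσp : 0 ≤ σp)
    (hσm : 0 ≤ σm) (hνp : 0 ≤ νp) (hνm : 0 ≤ νm) {E : Type*} [NormedAddCommGroup E]
    [MeasurableSpace E] [OpensMeasurableSpace E] [ProperSpace E] (μ : Measure E)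
    [IsFiniteMeasureOnCompacts μ] {u₀ : E → Fin 4 → ℝ} (hu₀ : Measurable u₀) {B R : ℝ}
    (hB : ∀ ξ, |u₀ ξ 3| ≤ B) (hvan : ∀ ξ, ‖ξ‖ ≤ R → u₀ ξ 0 = 0 ∧ u₀ ξ 1 = 0 ∧ u₀ ξ 2 = 0)
    {t : ℝ} (ht : 0 ≤ t) {i : Fin 4} (hi : i = 0 ∨ i = 2) :
    IntegrableOn (fun ξ => flow β₁ β₂ β₄ σp σm νp νm ‖ξ‖ (u₀ ξ) t i ^ 2)
      (Metric.closedBall 0 R) μ := by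
  refine Measure.integrableOn_of_bounded (M := (R * B * t) ^ 2) measure_closedBall_lt_top.ne
    (((measurable_pi_apply i).comp (measurable_flow hu₀ t)).pow_const 2).aestronglyMeasurable
    ((ae_restrict_mem measurableSet_closedBall).mono fun ξ hξ => ?_)
  rw [mem_closedBall_zero_iff] at hξ
  obtain ⟨h0, h1, h2⟩ := hvan ξ hξ
  have hbound := abs_flow_le hβ₁ hββ hσp hσm hνp hνm (norm_nonneg ξ) h0 h1 h2 ht
  have : |flow β₁ β₂ β₄ σp σm νp νm ‖ξ‖ (u₀ ξ) t i| ≤ R * B * t := by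
    refine le_trans (by rcases hi with rfl | rfl; exacts [hbound.1, hbound.2]) ?_
    exact mul_le_mul_of_nonneg_right
      (mul_le_mul hξ (hB ξ) (abs_nonneg _) ((norm_nonneg ξ).trans hξ)) ht
  rw [Real.norm_eq_abs, abs_pow]
  exact pow_le_pow_left₀ (abs_nonneg _) this 2

end A1

theorem lowfreq_L2_lower_bound_densities_general
    (β₁ β₂ β₃ β₄ σp σm νp νm : ℝ)
    (hβ₁ : 0 < β₁) (hβ₂ : 0 < β₂)
    (hσp : 0 < σp) (hσm : 0 < σm) (hνp : 0 < νp) (hνm : 0 < νm)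
    (hβ : β₂ = β₃) (hββ : β₁ * β₄ = β₂ ^ 2) :
    ∃ η > 0,
      ∀ u₀ : EuclideanSpace ℝ (Fin 3) → (Fin 4 → ℝ), Measurable u₀ →
        (∃ B : ℝ, ∀ ξ, ∀ i : Fin 4, |u₀ ξ i| ≤ B) →
        (∀ ξ, ‖ξ‖ ≤ η → u₀ ξ 0 = 0 ∧ u₀ ξ 1 = 0 ∧ u₀ ξ 2 = 0) →
        ∀ c₀ s M : ℝ, 0 < c₀ → 0 < s → 0 < M →
          (∀ ξ, ‖ξ‖ ≤ η → |u₀ ξ 3 - c₀| ≤ M * ‖ξ‖ ^ s) →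
          ∃ C₁ > 0, ∃ T > 0, ∀ t : ℝ, T ≤ t → ∀ i : Fin 4, i = 0 ∨ i = 2 →
            Real.sqrt (∫ ξ in Metric.closedBall (0 : EuclideanSpace ℝ (Fin 3)) η,
                ((NormedSpace.exp (t • A1 β₁ β₂ β₃ β₄ σp σm νp νm ‖ξ‖)).mulVec
                    (u₀ ξ) i) ^ 2)
              ≥ C₁ * c₀ * (1 + t) ^ (-(1 / 4 : ℝ)) := by
  subst hβ
  obtain ⟨a, ha, T₀, hT₀, k, hk, hflow⟩ :=
    A1.exists_abs_flow_ge_of_mem_shell hβ₁ hβ₂ hββ hσp.le hσm.le hνp.le hνm.le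
  refine ⟨1, one_pos, fun u₀ hu₀ ⟨B, hB⟩ hvan c₀ s M hc₀ hs hM hMb => ?_⟩
  obtain ⟨ρ, hρ, hρ1, hρc⟩ := exists_pos_half_le_of_abs_sub_le_rpow hc₀ hs hM one_pos hMb
  set κ := (volume : Measure (EuclideanSpace ℝ (Fin 3))).real (Metric.ball 0 1) with hκ_def
  have hκ : 0 < κ :=
    ENNReal.toReal_pos (Metric.measure_ball_pos _ _ one_pos).ne' measure_ball_lt_top.ne
  refine ⟨√(7 * κ * k ^ 2 * a ^ 5 / 4), by positivity, T₀ + (2 * a / ρ) ^ 2, by positivity,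
    fun t hT i hi => ?_⟩
  have ht : 0 < t := by nlinarith
  have hρt : 2 * (a / √t) ≤ ρ := by
    rw [← mul_div_assoc]
    exact div_sqrt_le_of_div_sq_le (by positivity) hρ (by nlinarith)
  have hshell : ∀ ξ : EuclideanSpace ℝ (Fin 3), a / √t ≤ ‖ξ‖ → ‖ξ‖ ≤ 2 * (a / √t) →
      (k * (c₀ / 2) * (a * √t)) ^ 2 ≤ A1.flow β₁ β₂ β₄ σp σm νp νm ‖ξ‖ (u₀ ξ) t i ^ 2 := by
    intro ξ hξ₁ hξ₂
    obtain ⟨h0, h1, h2⟩ := hvan ξ (hξ₂.trans (hρt.trans hρ1))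
    have hc := hρc ξ (hξ₂.trans hρt)
    refine (pow_le_pow_left₀ (by positivity) ?_ 2).trans_eq (sq_abs _)
    exact (by gcongr : k * (c₀ / 2) * (a * √t) ≤ k * u₀ ξ 3 * (a * √t)).trans
      (hflow t (by nlinarith) ‖ξ‖ hξ₁ hξ₂ (u₀ ξ) h0 h1 h2 (by linarith) i hi)
  have hint := mul_measureReal_annulus_le_setIntegral volume
    (A1.integrableOn_sq_flow hβ₁ hββ hσp.le hσm.le hνp.le hνm.le _ hu₀ (fun ξ => hB ξ 3) hvan
      ht.le hi) (fun ξ => sq_nonneg _) (by positivity) (hρt.trans hρ1) hshell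
  rw [finrank_euclideanSpace_fin, ← hκ_def] at hint
  refine ge_iff_le.mpr (mul_rpow_neg_quarter_le_sqrt (by positivity) ht (le_of_eq_of_le ?_ hint))
  field_simp
  norm_num

/-- Lower bound `(1+t)^{-1/4}` on the `L²` decay of the low-frequency parts of the
perturbed fraction densities for well-chosen initial data. -/
theorem lowfreq_L2_lower_bound_densities
    (β₁ β₂ β₃ β₄ σp σm νp νm : ℝ)
    (hβ₁ : 0 < β₁) (hβ₂ : 0 < β₂) (hβ₃ : 0 < β₃) (hβ₄ : 0 < β₄)
    (hσp : 0 < σp) (hσm : 0 < σm) (hνp : 0 < νp) (hνm : 0 < νm)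
    (hβ : β₂ = β₃) (hββ : β₁ * β₄ = β₂ ^ 2) :
    ∃ η > 0,
      ∀ u₀ : EuclideanSpace ℝ (Fin 3) → (Fin 4 → ℝ), Measurable u₀ →
        (∃ B : ℝ, ∀ ξ, ∀ i : Fin 4, |u₀ ξ i| ≤ B) →
        (∀ ξ, ‖ξ‖ ≤ η → u₀ ξ 0 = 0 ∧ u₀ ξ 1 = 0 ∧ u₀ ξ 2 = 0) →
        ∀ c₀ s M : ℝ, 0 < c₀ → 0 < s → 0 < M →
          (∀ ξ, ‖ξ‖ ≤ η → |u₀ ξ 3 - c₀| ≤ M * ‖ξ‖ ^ s) →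
          ∃ C₁ > 0, ∃ T > 0, ∀ t : ℝ, T ≤ t → ∀ i : Fin 4, i = 0 ∨ i = 2 →
            Real.sqrt (∫ ξ in Metric.closedBall (0 : EuclideanSpace ℝ (Fin 3)) η,
                ((NormedSpace.exp (t • A1 β₁ β₂ β₃ β₄ σp σm νp νm ‖ξ‖)).mulVec
                    (u₀ ξ) i) ^ 2)
              ≥ C₁ * c₀ * (1 + t) ^ (-(1 / 4 : ℝ)) :=
  lowfreq_L2_lower_bound_densities_general β₁ β₂ β₃ β₄ σp σm νp νm hβ₁ hβ₂ hσp hσm hνp hνm hβ hββ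
end

section
/- For all θ > 0, a > 0, η > 0 and M > 0 there exist C > 0 and T ≥ 1 such that for every continuous function ψ : [0, η] → ℝ satisfying |ψ(r)| ≤ M r³ for all r ∈ [0, η], and every t ≥ T: ∫_{ξ ∈ ℝ³, |ξ| ≤ η} e^{−θ|ξ|² t} cos²( (a|ξ| + ψ(|ξ|)) t ) dξ ≥ C t^{−3/2}. -/
/-!
In polar coordinates the integral is `4π ∫₀^η r² e^{-θr²t} cos²((ar + ψ r) t) dr`; write `t = s²`.
On the shell `1/s ≤ r ≤ 2/s` the weight `r² e^{-θr²s²}` is at least `e^{-4θ}/s²`, the perturbation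
`ψ` moves the phase by at most `8M/s`, and over this interval of length `1/s` the integral of
`cos²(a s² r)` is `1/(2s)` up to `1/(2as²)`. So the shell alone contributes
`≳ e^{-4θ} s⁻³ = e^{-4θ} t^{-3/2}` once `s` is large.
-/

open MeasureTheory Metric Set Real

theorem setIntegral_closedBall_fun_norm {E F : Type*} [NormedAddCommGroup E] [NormedSpace ℝ E]
    [Nontrivial E] [FiniteDimensional ℝ E] [MeasurableSpace E] [BorelSpace E] (μ : Measure E)
    [μ.IsAddHaarMeasure] [NormedAddCommGroup F] [NormedSpace ℝ F] (f : ℝ → F) (R : ℝ) :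
    ∫ x in closedBall (0 : E) R, f ‖x‖ ∂μ = Module.finrank ℝ E • μ.real (ball 0 1) •
      ∫ y in Ioc 0 R, y ^ (Module.finrank ℝ E - 1) • f y := by
  have hball : (closedBall (0 : E) R).indicator (fun x ↦ f ‖x‖) =
      fun x ↦ (Iic R).indicator f ‖x‖ := by
    ext x
    by_cases hx : ‖x‖ ≤ R <;> simp [indicator, hx]
  rw [← integral_indicator measurableSet_closedBall, hball, integral_fun_norm_addHaar]
  simp_rw [← indicator_smul_apply (Iic R) (fun y : ℝ ↦ y ^ (Module.finrank ℝ E - 1)),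
    setIntegral_indicator measurableSet_Iic, Ioi_inter_Iic]

theorem cos_sq_sub_abs_sub_le (x y : ℝ) : cos x ^ 2 - |x - y| ≤ cos y ^ 2 := by
  have := abs_cos_sub_cos_le (2 * x) (2 * y)
  rw [← mul_sub, abs_mul, abs_two] at this
  rw [cos_sq x, cos_sq y]
  linarith [(abs_le.1 this).1, (abs_le.1 this).2]

theorem le_integral_cos_mul_sq {b : ℝ} (hb : 0 < b) (c d : ℝ) :
    (d - c) / 2 - 1 / (2 * b) ≤ ∫ y in c..d, cos (b * y) ^ 2 := by
  rw [intervalIntegral.integral_comp_mul_left (fun y ↦ cos y ^ 2) hb.ne', integral_cos_sq,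
    smul_eq_mul]
  have hosc : -1 ≤ cos (b * d) * sin (b * d) - cos (b * c) * sin (b * c) := by
    nlinarith [sq_nonneg (cos (b * d) + sin (b * d)), sq_nonneg (cos (b * c) - sin (b * c)),
      sin_sq_add_cos_sq (b * d), sin_sq_add_cos_sq (b * c)]
  calc (d - c) / 2 - 1 / (2 * b) = b⁻¹ * ((-1 + b * d - b * c) / 2) := by field_simp; ring
    _ ≤ _ := by gcongr

theorem le_radial_integrand_of_mem_Icc {θ a M s r : ℝ} {ψ : ℝ → ℝ} (hθ : 0 ≤ θ) (hs : 0 < s)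
    (hr : r ∈ Icc (1 / s) (2 / s)) (hψ : |ψ r| ≤ M * r ^ 3) :
    exp (-(4 * θ)) / s ^ 2 * (cos (a * s ^ 2 * r) ^ 2 - 8 * M / s) ≤
      r ^ 2 * (exp (-θ * r ^ 2 * s ^ 2) * cos ((a * r + ψ r) * s ^ 2) ^ 2) := by
  obtain ⟨hr₁, hr₂⟩ := hr
  have hr₀ : 0 < r := lt_of_lt_of_le (by positivity) hr₁
  have hrs₁ : 1 ≤ r * s := by rwa [div_le_iff₀ hs] at hr₁
  have hrs₂ : r * s ≤ 2 := by rwa [le_div_iff₀ hs] at hr₂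
  have hM : 0 ≤ M := nonneg_of_mul_nonneg_left ((abs_nonneg _).trans hψ) (by positivity)
  have hphase : |a * s ^ 2 * r - (a * r + ψ r) * s ^ 2| ≤ 8 * M / s := by
    rw [show a * s ^ 2 * r - (a * r + ψ r) * s ^ 2 = -(ψ r * s ^ 2) by ring, abs_neg, abs_mul,
      abs_of_pos (by positivity : 0 < s ^ 2)]
    calc |ψ r| * s ^ 2 ≤ M * r ^ 3 * s ^ 2 := by gcongr
      _ = M * (r * s) ^ 3 / s := by field_simp
      _ ≤ M * 2 ^ 3 / s := by gcongr
      _ = 8 * M / s := by ring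
  have hweight : exp (-(4 * θ)) / s ^ 2 ≤ r ^ 2 * exp (-θ * r ^ 2 * s ^ 2) := by
    have hr₂' : 1 / s ^ 2 ≤ r ^ 2 := by
      rw [div_le_iff₀ (by positivity)]; nlinarith
    have hexp : -(4 * θ) ≤ -θ * r ^ 2 * s ^ 2 := by
      nlinarith [mul_le_mul_of_nonneg_left (pow_le_pow_left₀ (by positivity) hrs₂ 2) hθ]
    calc exp (-(4 * θ)) / s ^ 2 = 1 / s ^ 2 * exp (-(4 * θ)) := by ring
      _ ≤ r ^ 2 * exp (-θ * r ^ 2 * s ^ 2) := by gcongr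
  calc exp (-(4 * θ)) / s ^ 2 * (cos (a * s ^ 2 * r) ^ 2 - 8 * M / s)
      ≤ exp (-(4 * θ)) / s ^ 2 * cos ((a * r + ψ r) * s ^ 2) ^ 2 := by
        gcongr
        linarith [cos_sq_sub_abs_sub_le (a * s ^ 2 * r) ((a * r + ψ r) * s ^ 2)]
    _ ≤ r ^ 2 * exp (-θ * r ^ 2 * s ^ 2) * cos ((a * r + ψ r) * s ^ 2) ^ 2 := by gcongr
    _ = _ := mul_assoc _ _ _

theorem le_integral_radial_minorant {θ a M s : ℝ} (ha : 0 < a) (hs : 0 < s) :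
    exp (-(4 * θ)) / s ^ 3 * (1 / 2 - (1 / (2 * a) + 8 * M) / s) ≤
      ∫ r in (1 / s)..(2 / s), exp (-(4 * θ)) / s ^ 2 * (cos (a * s ^ 2 * r) ^ 2 - 8 * M / s) := by
  have hcos := le_integral_cos_mul_sq (by positivity : 0 < a * s ^ 2) (1 / s) (2 / s)
  rw [intervalIntegral.integral_const_mul, intervalIntegral.integral_sub
    ((by fun_prop : Continuous fun r ↦ cos (a * s ^ 2 * r) ^ 2).intervalIntegrable _ _)
    intervalIntegrable_const, intervalIntegral.integral_const, smul_eq_mul]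
  calc exp (-(4 * θ)) / s ^ 3 * (1 / 2 - (1 / (2 * a) + 8 * M) / s)
      = exp (-(4 * θ)) / s ^ 2 * ((2 / s - 1 / s) / 2 - 1 / (2 * (a * s ^ 2)) -
          (2 / s - 1 / s) * (8 * M / s)) := by field_simp; ring
    _ ≤ _ := by gcongr

theorem le_setIntegral_radial_integrand {θ a η M s : ℝ} {ψ : ℝ → ℝ} (hθ : 0 ≤ θ) (ha : 0 < a)
    (hs : 0 < s) (hsη : 2 / s ≤ η) (hsa : 2 / a + 32 * M ≤ s) (hψc : ContinuousOn ψ (Icc 0 η))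
    (hψ : ∀ r ∈ Icc 0 η, |ψ r| ≤ M * r ^ 3) :
    exp (-(4 * θ)) / 4 / s ^ 3 ≤
      ∫ r in Ioc 0 η, r ^ 2 * (exp (-θ * r ^ 2 * s ^ 2) * cos ((a * r + ψ r) * s ^ 2) ^ 2) := by
  set F : ℝ → ℝ := fun r ↦ r ^ 2 * (exp (-θ * r ^ 2 * s ^ 2) * cos ((a * r + ψ r) * s ^ 2) ^ 2)
  have hann : Icc (1 / s) (2 / s) ⊆ Icc 0 η := Icc_subset_Icc (by positivity) hsη
  have hFc : ContinuousOn F (Icc 0 η) := by fun_prop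
  have hF₀ : 0 ≤ᵐ[volume.restrict (Ioc 0 η)] F := ae_of_all _ fun r ↦ by positivity
  have herr : (1 / (2 * a) + 8 * M) / s ≤ 1 / 4 := by
    rw [div_le_iff₀ hs]
    linarith [show 1 / (2 * a) = 2 / a / 4 by ring]
  calc exp (-(4 * θ)) / 4 / s ^ 3 = exp (-(4 * θ)) / s ^ 3 * (1 / 2 - 1 / 4) := by ring
    _ ≤ exp (-(4 * θ)) / s ^ 3 * (1 / 2 - (1 / (2 * a) + 8 * M) / s) := by gcongr
    _ ≤ ∫ r in (1 / s)..(2 / s), exp (-(4 * θ)) / s ^ 2 * (cos (a * s ^ 2 * r) ^ 2 - 8 * M / s) :=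
        le_integral_radial_minorant ha hs
    _ ≤ ∫ r in (1 / s)..(2 / s), F r :=
        intervalIntegral.integral_mono_on (by gcongr; norm_num)
          ((by fun_prop : Continuous _).intervalIntegrable _ _)
          ((hFc.mono hann).intervalIntegrable_of_Icc (by gcongr; norm_num))
          fun r hr ↦ le_radial_integrand_of_mem_Icc hθ hs hr (hψ r (hann hr))
    _ = ∫ r in Ioc (1 / s) (2 / s), F r := intervalIntegral.integral_of_le (by gcongr; norm_num)
    _ ≤ ∫ r in Ioc 0 η, F r :=
        setIntegral_mono_set (hFc.integrableOn_Icc.mono_set Ioc_subset_Icc_self) hF₀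
          (Ioc_subset_Ioc (by positivity) hsη).eventuallyLE

theorem oscillatory_gaussian_lower_bound_general
    (θ a η M : ℝ) (hθ : 0 < θ) (ha : 0 < a) (hη : 0 < η) :
    ∃ C > 0, ∃ T : ℝ, 1 ≤ T ∧
      ∀ ψ : ℝ → ℝ, ContinuousOn ψ (Set.Icc 0 η) →
        (∀ r ∈ Set.Icc (0 : ℝ) η, |ψ r| ≤ M * r ^ 3) →
        ∀ t : ℝ, T ≤ t →
          (∫ ξ in Metric.closedBall (0 : EuclideanSpace ℝ (Fin 3)) η,
              Real.exp (-θ * ‖ξ‖ ^ 2 * t) * Real.cos ((a * ‖ξ‖ + ψ ‖ξ‖) * t) ^ 2)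
            ≥ C * t ^ (-(3 / 2 : ℝ)) := by
  set V := (volume : Measure (EuclideanSpace ℝ (Fin 3))).real (ball 0 1)
  have hV : 0 < V := ENNReal.toReal_pos (measure_ball_pos _ _ one_pos).ne' measure_ball_lt_top.ne
  refine ⟨3 * V * (exp (-(4 * θ)) / 4), by positivity,
    max 1 (max ((2 / η) ^ 2) ((2 / a + 32 * M) ^ 2)), le_max_left _ _, ?_⟩
  intro ψ hψc hψ t ht
  obtain ⟨s, hs, rfl⟩ : ∃ s, 0 < s ∧ s ^ 2 = t :=
    ⟨√t, sqrt_pos.2 (one_pos.trans_le ((le_max_left _ _).trans ht)),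
      sq_sqrt (zero_le_one.trans ((le_max_left _ _).trans ht))⟩
  have hsη : 2 / s ≤ η := by
    rw [div_le_comm₀ hs hη, ← sq_le_sq₀ (by positivity) hs.le]
    exact (le_max_left _ _).trans ((le_max_right _ _).trans ht)
  have hsa : 2 / a + 32 * M ≤ s := by
    refine le_trans (le_abs_self _) ((sq_le_sq₀ (abs_nonneg _) hs.le).1 ?_)
    rw [sq_abs]
    exact (le_max_right _ _).trans ((le_max_right _ _).trans ht)
  have hrpow : (s ^ 2) ^ (-(3 / 2 : ℝ)) = 1 / s ^ 3 := by
    rw [← rpow_natCast, ← rpow_mul hs.le, show ((2 : ℕ) : ℝ) * -(3 / 2) = -(3 : ℕ) by norm_num,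
      rpow_neg hs.le, rpow_natCast, one_div]
  rw [setIntegral_closedBall_fun_norm volume
    (fun r ↦ exp (-θ * r ^ 2 * s ^ 2) * cos ((a * r + ψ r) * s ^ 2) ^ 2),
    finrank_euclideanSpace_fin, hrpow]
  calc 3 * V * (exp (-(4 * θ)) / 4) * (1 / s ^ 3)
      = 3 • V • (exp (-(4 * θ)) / 4 / s ^ 3) := by simp only [smul_eq_mul]; ring
    _ ≤ _ := by gcongr; exact le_setIntegral_radial_integrand hθ.le ha hs hsη hsa hψc hψ

/-- Oscillatory Gaussian lower bound: for all `θ, a, η, M > 0` there are `C > 0` and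
`T ≥ 1` such that for every continuous `ψ : [0,η] → ℝ` with `|ψ(r)| ≤ M r³` and all
`t ≥ T`, `∫_{|ξ|≤η} e^{-θ|ξ|²t} cos²((a|ξ| + ψ(|ξ|)) t) dξ ≥ C t^{-3/2}`. -/
theorem oscillatory_gaussian_lower_bound
    (θ a η M : ℝ) (hθ : 0 < θ) (ha : 0 < a) (hη : 0 < η) (hM : 0 < M) :
    ∃ C > 0, ∃ T : ℝ, 1 ≤ T ∧
      ∀ ψ : ℝ → ℝ, ContinuousOn ψ (Set.Icc 0 η) →
        (∀ r ∈ Set.Icc (0 : ℝ) η, |ψ r| ≤ M * r ^ 3) →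
        ∀ t : ℝ, T ≤ t →
          (∫ ξ in Metric.closedBall (0 : EuclideanSpace ℝ (Fin 3)) η,
              Real.exp (-θ * ‖ξ‖ ^ 2 * t) * Real.cos ((a * ‖ξ‖ + ψ ‖ξ‖) * t) ^ 2)
            ≥ C * t ^ (-(3 / 2 : ℝ)) :=
  oscillatory_gaussian_lower_bound_general θ a η M hθ ha hη
end

section
/- Let γ⁺ ≥ 1, γ⁻ ≥ 1, A⁺ > 0, A⁻ > 0, R⁺ > 0 and R⁻ > 0 be real numbers. Define φ : (R⁺, ∞) → ℝ by φ(ρ) = A⁺ ρ^{γ⁺} − A⁻ ( R⁻ ρ / (ρ − R⁺) )^{γ⁻}. Then φ is strictly monotone increasing on (R⁺, ∞), and there exists a unique ρ̃ ∈ (R⁺, ∞) with φ(ρ̃) = 0. -/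
/-!
The map `ρ ↦ R⁻ρ/(ρ − R⁺) = R⁻ + R⁻R⁺/(ρ − R⁺)` decreases strictly from `+∞` (as `ρ → R⁺⁺`) to
`R⁻` (as `ρ → ∞`), so `φ` is a strictly increasing continuous function on `(R⁺, ∞)` running
from `−∞` to `+∞`. By the intermediate value theorem it takes every real value exactly once.
-/

open Filter Topology Set

theorem existsUnique_mem_Ioi_eq_of_tendsto {f : ℝ → ℝ} {a : ℝ} (hmono : StrictMonoOn f (Ioi a))
    (hcont : ContinuousOn f (Ioi a)) (hbot : Tendsto f (𝓝[>] a) atBot)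
    (htop : Tendsto f atTop atTop) (y : ℝ) : ∃! x, x ∈ Ioi a ∧ f x = y := by
  obtain ⟨x, hx, hfx⟩ := isPreconnected_Ioi.intermediate_value_Iii (l₁ := 𝓝[>] a) inf_le_right
    (le_principal_iff.2 (Ioi_mem_atTop a)) hcont hbot htop (mem_univ y)
  exact ⟨x, ⟨hx, hfx⟩, fun x' hx' => hmono.injOn hx'.1 hx (hx'.2.trans hfx.symm)⟩

section MulDivSub

variable {a c : ℝ}

theorem strictAntiOn_mul_div_sub (ha : 0 < a) (hc : 0 < c) :
    StrictAntiOn (fun x => c * x / (x - a)) (Ioi a) := by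
  intro x (hx : a < x) y (hy : a < y) hxy
  rw [div_lt_div_iff₀ (sub_pos.2 hy) (sub_pos.2 hx)]
  nlinarith [mul_pos (mul_pos hc ha) (sub_pos.2 hxy)]

theorem tendsto_mul_div_sub_nhdsGT (ha : 0 < a) (hc : 0 < c) :
    Tendsto (fun x => c * x / (x - a)) (𝓝[>] a) atTop := by
  have hsub : Tendsto (fun x => x - a) (𝓝[>] a) (𝓝[>] 0) :=
    tendsto_nhdsWithin_of_tendsto_nhds_of_eventually_within _
      (tendsto_nhdsWithin_of_tendsto_nhds (by simpa using (continuous_sub_right a).tendsto a))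
      (eventually_nhdsWithin_of_forall fun x (hx : a < x) => sub_pos.2 hx)
  have hnum : Tendsto (fun x => c * x) (𝓝[>] a) (𝓝 (c * a)) :=
    tendsto_nhdsWithin_of_tendsto_nhds ((continuous_const_mul c).tendsto a)
  exact hnum.pos_mul_atTop (mul_pos hc ha) hsub.inv_tendsto_nhdsGT_zero

theorem tendsto_mul_div_sub_atTop (c a : ℝ) :
    Tendsto (fun x => c * x / (x - a)) atTop (𝓝 c) := by
  have hrest : Tendsto (fun x => c * a / (x - a)) atTop (𝓝 0) :=
    tendsto_const_nhds.div_atTop (tendsto_atTop_add_const_right atTop (-a) tendsto_id)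
  have hsplit : (fun x => c + c * a / (x - a)) =ᶠ[atTop] fun x => c * x / (x - a) := by
    filter_upwards [Ioi_mem_atTop a] with x (hx : a < x)
    field_simp [(sub_pos.2 hx).ne']
    ring
  simpa using (tendsto_const_nhds.add hrest).congr' hsplit

end MulDivSub

noncomputable def pressureGap (Ap γp Am γm Rp Rm ρ : ℝ) : ℝ :=
  Ap * ρ ^ γp - Am * (Rm * ρ / (ρ - Rp)) ^ γm

section PressureGap

variable {Ap γp Am γm Rp Rm : ℝ}

theorem strictMonoOn_pressureGap (hγp : 0 < γp) (hγm : 0 < γm) (hAp : 0 < Ap) (hAm : 0 < Am)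
    (hRp : 0 < Rp) (hRm : 0 < Rm) : StrictMonoOn (pressureGap Ap γp Am γm Rp Rm) (Ioi Rp) := by
  intro x (hx : Rp < x) y (hy : Rp < y) hxy
  have hpos : 0 < Rm * y / (y - Rp) := div_pos (mul_pos hRm (hRp.trans hy)) (sub_pos.2 hy)
  have hdensity := strictAntiOn_mul_div_sub hRp hRm hx hy hxy
  have hp : x ^ γp < y ^ γp := Real.rpow_lt_rpow (hRp.trans hx).le hxy hγp
  have hm := Real.rpow_lt_rpow hpos.le hdensity hγm
  unfold pressureGap
  nlinarith

theorem continuousOn_pressureGap (hγp : 0 ≤ γp) (hγm : 0 ≤ γm) :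
    ContinuousOn (pressureGap Ap γp Am γm Rp Rm) (Ioi Rp) := by
  have hdensity : ContinuousOn (fun x => Rm * x / (x - Rp)) (Ioi Rp) :=
    (continuous_const_mul Rm).continuousOn.div (continuous_sub_right Rp).continuousOn
      fun x (hx : Rp < x) => (sub_pos.2 hx).ne'
  exact (continuousOn_const.mul ((Real.continuous_rpow_const hγp).continuousOn)).sub
    (continuousOn_const.mul (hdensity.rpow_const fun _ _ => Or.inr hγm))

theorem tendsto_pressureGap_nhdsGT (hγm : 0 < γm) (hAm : 0 < Am) (hRp : 0 < Rp) (hRm : 0 < Rm) :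
    Tendsto (pressureGap Ap γp Am γm Rp Rm) (𝓝[>] Rp) atBot := by
  have hp : Tendsto (fun x => Ap * x ^ γp) (𝓝[>] Rp) (𝓝 (Ap * Rp ^ γp)) :=
    tendsto_nhdsWithin_of_tendsto_nhds
      (((Real.continuousAt_rpow_const Rp γp (Or.inl hRp.ne')).tendsto).const_mul Ap)
  have hm : Tendsto (fun x => Am * (Rm * x / (x - Rp)) ^ γm) (𝓝[>] Rp) atTop :=
    ((tendsto_rpow_atTop hγm).comp (tendsto_mul_div_sub_nhdsGT hRp hRm)).const_mul_atTop hAm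
  unfold pressureGap
  simpa only [sub_eq_add_neg, Function.comp_def] using
    hp.add_atBot (tendsto_neg_atTop_atBot.comp hm)

theorem tendsto_pressureGap_atTop (hγp : 0 < γp) (hAp : 0 < Ap) (hRm : 0 < Rm) :
    Tendsto (pressureGap Ap γp Am γm Rp Rm) atTop atTop := by
  have hp : Tendsto (fun x => Ap * x ^ γp) atTop atTop :=
    (tendsto_rpow_atTop hγp).const_mul_atTop hAp
  have hm : Tendsto (fun x => Am * (Rm * x / (x - Rp)) ^ γm) atTop (𝓝 (Am * Rm ^ γm)) :=
    (((Real.continuousAt_rpow_const Rm γm (Or.inl hRm.ne')).tendsto).comp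
      (tendsto_mul_div_sub_atTop Rm Rp)).const_mul Am
  unfold pressureGap
  simpa only [sub_eq_add_neg] using hp.atTop_add hm.neg

end PressureGap

/-- The common-pressure constraint of the two-fluid model:
`φ(ρ) = A⁺ ρ^{γ⁺} − A⁻ (R⁻ρ/(ρ−R⁺))^{γ⁻}` is strictly increasing on `(R⁺, ∞)` and
has a unique zero there. -/
theorem pressure_constraint_strictMono_and_unique_root
    (γp γm Ap Am Rp Rm : ℝ)
    (hγp : 1 ≤ γp) (hγm : 1 ≤ γm) (hAp : 0 < Ap) (hAm : 0 < Am)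
    (hRp : 0 < Rp) (hRm : 0 < Rm)
    (φ : ℝ → ℝ)
    (hφ : ∀ ρ ∈ Set.Ioi Rp, φ ρ = Ap * ρ ^ γp - Am * (Rm * ρ / (ρ - Rp)) ^ γm) :
    StrictMonoOn φ (Set.Ioi Rp) ∧ ∃! ρ : ℝ, ρ ∈ Set.Ioi Rp ∧ φ ρ = 0 := by
  have hγp0 : 0 < γp := one_pos.trans_le hγp
  have hγm0 : 0 < γm := one_pos.trans_le hγm
  have hEq : EqOn (pressureGap Ap γp Am γm Rp Rm) φ (Ioi Rp) := fun ρ hρ => (hφ ρ hρ).symm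
  have hmono := (strictMonoOn_pressureGap hγp0 hγm0 hAp hAm hRp hRm).congr hEq
  refine ⟨hmono, existsUnique_mem_Ioi_eq_of_tendsto hmono
    ((continuousOn_pressureGap hγp0.le hγm0.le).congr hEq.symm) ?_ ?_ 0⟩
  · exact (tendsto_pressureGap_nhdsGT hγm0 hAm hRp hRm).congr'
      (eventuallyEq_nhdsWithin_of_eqOn hEq)
  · exact (tendsto_pressureGap_atTop hγp0 hAp hRm).congr'
      (eventuallyEq_of_mem (Ioi_mem_atTop Rp) hEq)
end

section
/- There exist constants η > 0 and c > 0 such that for every r with 0 < r ≤ η, every complex root λ of the characteristic polynomial det(λ I − A₁(r)) satisfies Re λ ≤ −c r². -/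
/-!
Since `β₂ β₃ = β₁ β₄`, the characteristic polynomial `p₊ p₋ - β₂ β₃ r⁴` of `A₁(r)`, with
`p₊ = λ² + ν⁺ r² λ + β₁ r² + σ⁺ r⁴` and `p₋` likewise with `ν⁻, β₄, σ⁻`, is a quartic in `λ` whose coefficients are of orders
`x, x, x², x³` in `x = r²`. Shifting `λ = z - κ x` and dividing the Routh–Hurwitz quantities by
their powers of `x`, at `κ = x = 0` they become `ν⁺ + ν⁻`, `β₁ ν⁻ + β₄ ν⁺`, `β₁ σ⁻ + β₄ σ⁺` and
`(β₁ ν⁻ + β₄ ν⁺)(β₁ ν⁺ + β₄ ν⁻)`, all positive; by continuity the shifted polynomial stays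
Hurwitz for some `κ > 0` and all small `x`, so `Re λ ≤ -κ r²`. The weak Routh–Hurwitz criterion
for a real quartic is proved by splitting it into two real quadratics through the resolvent cubic.
-/

open Matrix

open Filter Topology

theorem det_smul_one_sub_A1 (β₁ β₂ β₃ β₄ σp σm νp νm r : ℝ) (lam : ℂ) :
    (lam • (1 : Matrix (Fin 4) (Fin 4) ℂ) - (A1 β₁ β₂ β₃ β₄ σp σm νp νm r).map Complex.ofReal).det
      = (lam ^ 2 + νp * r ^ 2 * lam + β₁ * r ^ 2 + σp * r ^ 4)
          * (lam ^ 2 + νm * r ^ 2 * lam + β₄ * r ^ 2 + σm * r ^ 4) - β₂ * β₃ * r ^ 4 := by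
  simp [det_succ_row_zero, Fin.sum_univ_succ, A1, Matrix.one_apply, Fin.succAbove]
  ring

-- `y⁴ + P y² + Q y + R = (y² + U y + v) (y² - U y + w)`
theorem exists_depressed_quartic_factorization (P Q R : ℝ) :
    ∃ U v w : ℝ, v + w - U ^ 2 = P ∧ U * (w - v) = Q ∧ v * w = R := by
  rcases eq_or_ne Q 0 with rfl | hQ
  · rcases le_or_gt (4 * R) (P ^ 2) with hD | hD
    · have hsq := Real.sq_sqrt (show 0 ≤ P ^ 2 - 4 * R by linarith)
      refine ⟨0, (P - √(P ^ 2 - 4 * R)) / 2, (P + √(P ^ 2 - 4 * R)) / 2,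
        by ring, by ring, by linear_combination -hsq / 4⟩
    · have hR : 0 < R := by nlinarith [sq_nonneg P]
      have hsR := Real.sq_sqrt hR.le
      have hP : P < 2 * √R := by nlinarith [Real.sqrt_nonneg R]
      have hU := Real.sq_sqrt (show 0 ≤ 2 * √R - P by linarith)
      exact ⟨√(2 * √R - P), √R, √R, by linear_combination -hU, by ring, by linear_combination hsR⟩
  · -- `u = U ^ 2` is a positive root of the resolvent cubic `u ((u + P) ^ 2 - 4 R) = Q ^ 2`
    set f : ℝ → ℝ := fun u => u * ((u + P) ^ 2 - 4 * R) - Q ^ 2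
    set M := 1 + |P| + 4 * |R| + Q ^ 2
    have hf0 : f 0 < 0 := by simp [f, sq_pos_of_ne_zero hQ]
    have hfM : 0 ≤ f M := by
      have hMP : 1 + 4 * |R| + Q ^ 2 ≤ M + P := by simp only [M]; linarith [neg_abs_le P]
      have hMP_sq : M + P ≤ (M + P) ^ 2 := by nlinarith [abs_nonneg R, sq_nonneg Q]
      have hM : Q ^ 2 ≤ M := by simp only [M]; linarith [abs_nonneg P, abs_nonneg R]
      nlinarith [le_abs_self R, abs_nonneg R, sq_nonneg Q]
    obtain ⟨u, hu, hfu⟩ := intermediate_value_Icc (by positivity : (0 : ℝ) ≤ M)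
      (by fun_prop : Continuous f).continuousOn ⟨hf0.le, hfM⟩
    have hu0 : 0 < u := hu.1.lt_of_ne (by rintro rfl; exact hf0.ne hfu)
    have hsu := Real.mul_self_sqrt hu0.le
    have hsu0 : √u ≠ 0 := (Real.sqrt_pos.2 hu0).ne'
    refine ⟨√u, (P + u - Q / √u) / 2, (P + u + Q / √u) / 2, by rw [sq, hsu]; ring,
      by field_simp; ring, ?_⟩
    have hres : u * ((u + P) ^ 2 - 4 * R) - Q ^ 2 = 0 := hfu
    field_simp
    linear_combination hres + ((P + u) ^ 2 - 4 * R) * hsu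

theorem exists_quartic_factorization (a b c d : ℝ) :
    ∃ p q s t : ℝ, p + s = a ∧ p * s + q + t = b ∧ p * t + q * s = c ∧ q * t = d := by
  -- depress by `y = z + a / 4`
  obtain ⟨U, v, w, h₁, h₂, h₃⟩ := exists_depressed_quartic_factorization (b - 3 * a ^ 2 / 8)
    (c - a * b / 2 + a ^ 3 / 8) (d - a * c / 4 + a ^ 2 * b / 16 - 3 * a ^ 4 / 256)
  exact ⟨U + a / 2, v + U * a / 4 + a ^ 2 / 16, -U + a / 2, w - U * a / 4 + a ^ 2 / 16,
    by ring, by linear_combination h₁, by linear_combination h₂ + a / 2 * h₁,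
    by linear_combination h₃ + a ^ 2 / 16 * h₁ + a / 4 * h₂⟩

theorem re_nonpos_of_quadratic_eq_zero {p q : ℝ} (hp : 0 ≤ p) (hq : 0 ≤ q) {z : ℂ}
    (hz : z ^ 2 + p * z + q = 0) : z.re ≤ 0 := by
  have hre := congrArg Complex.re hz
  have him := congrArg Complex.im hz
  simp only [sq, Complex.add_re, Complex.add_im, Complex.mul_re, Complex.mul_im,
    Complex.ofReal_re, Complex.ofReal_im, Complex.zero_re, Complex.zero_im] at hre him
  have him' : z.im * (2 * z.re + p) = 0 := by linear_combination him
  rcases mul_eq_zero.1 him' with h | h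
  · rw [h] at hre
    nlinarith
  · linarith

theorem re_nonpos_of_quartic_eq_zero {a b c d : ℝ} (ha : 0 < a) (hc : 0 < c) (hd : 0 < d)
    (hH : 0 < c * (a * b - c) - a ^ 2 * d) {z : ℂ}
    (hz : z ^ 4 + a * z ^ 3 + b * z ^ 2 + c * z + d = 0) : z.re ≤ 0 := by
  obtain ⟨p, q, s, t, rfl, rfl, rfl, rfl⟩ := exists_quartic_factorization a b c d
  -- the Hurwitz determinant of a product of two monic quadratics
  have hH' : 0 < p * s * ((q - t) ^ 2 + (p * t + q * s) * (p + s)) := by linear_combination hH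
  have hps : 0 < p * s := pos_of_mul_pos_left hH' (by positivity)
  have hp : 0 < p := by nlinarith
  have hs : 0 < s := by nlinarith
  obtain ⟨hq, ht⟩ : 0 < q ∧ 0 < t := by
    refine (pos_and_pos_or_neg_and_neg_of_mul_pos hd).resolve_right fun ⟨hq, ht⟩ => ?_
    nlinarith [mul_pos hp (neg_pos.2 ht), mul_pos hs (neg_pos.2 hq)]
  have hfac : (z ^ 2 + p * z + q) * (z ^ 2 + s * z + t) = 0 := by
    rw [← hz]; push_cast; ring
  rcases mul_eq_zero.1 hfac with h | h
  · exact re_nonpos_of_quadratic_eq_zero hp.le hq.le h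
  · exact re_nonpos_of_quadratic_eq_zero hs.le ht.le h

/-- At `x = r²` the characteristic polynomial of `A₁(r)` has this form. -/
def scaledQuartic (x α β γ δ : ℝ) (z : ℂ) : ℂ :=
  z ^ 4 + ↑(x * α) * z ^ 3 + ↑(x * β) * z ^ 2 + ↑(x ^ 2 * γ) * z + ↑(x ^ 3 * δ)

/-- The Routh–Hurwitz conditions `a, c, d > 0`, `c (a b - c) - a² d > 0` for
`scaledQuartic x α β γ δ`, with the powers of `x` divided out. -/
def ScaledHurwitz (x α β γ δ : ℝ) : Prop :=
  0 < α ∧ 0 < γ ∧ 0 < δ ∧ 0 < γ * (α * β - γ) - x * α ^ 2 * δ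

theorem ScaledHurwitz.re_nonpos {x α β γ δ : ℝ} (hx : 0 < x) (h : ScaledHurwitz x α β γ δ)
    {z : ℂ} (hz : scaledQuartic x α β γ δ z = 0) : z.re ≤ 0 := by
  obtain ⟨hα, hγ, hδ, hH⟩ := h
  refine re_nonpos_of_quartic_eq_zero (mul_pos hx hα) (by positivity) (by positivity) ?_ hz
  have : x ^ 2 * γ * (x * α * (x * β) - x ^ 2 * γ) - (x * α) ^ 2 * (x ^ 3 * δ)
      = x ^ 4 * (γ * (α * β - γ) - x * α ^ 2 * δ) := by ring
  rw [this]
  positivity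

theorem scaledQuartic_shift (x α β γ δ κ : ℝ) (z : ℂ) :
    scaledQuartic x α β γ δ z =
      scaledQuartic x (α - 4 * κ) (β - 3 * α * κ * x + 6 * κ ^ 2 * x)
        (γ - 2 * β * κ + 3 * α * κ ^ 2 * x - 4 * κ ^ 3 * x)
        (δ - γ * κ + β * κ ^ 2 - α * κ ^ 3 * x + κ ^ 4 * x) (z + ↑(κ * x)) := by
  simp only [scaledQuartic]
  push_cast
  ring

theorem eventually_scaledHurwitz {X : Type*} [TopologicalSpace X] {x α β γ δ : X → ℝ} {p₀ : X}
    (hx : ContinuousAt x p₀) (hα : ContinuousAt α p₀) (hβ : ContinuousAt β p₀)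
    (hγ : ContinuousAt γ p₀) (hδ : ContinuousAt δ p₀)
    (h : ScaledHurwitz (x p₀) (α p₀) (β p₀) (γ p₀) (δ p₀)) :
    ∀ᶠ p in 𝓝 p₀, ScaledHurwitz (x p) (α p) (β p) (γ p) (δ p) := by
  obtain ⟨h₁, h₂, h₃, h₄⟩ := h
  have hH : ContinuousAt (fun p => γ p * (α p * β p - γ p) - x p * α p ^ 2 * δ p) p₀ := by
    fun_prop
  filter_upwards [continuousAt_const.eventually_lt hα h₁, continuousAt_const.eventually_lt hγ h₂,
    continuousAt_const.eventually_lt hδ h₃,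
    continuousAt_const.eventually_lt hH h₄] with p h₁ h₂ h₃ h₄
  exact ⟨h₁, h₂, h₃, h₄⟩

theorem exists_re_le_of_scaledQuartic_eq_zero {α β γ δ : ℝ → ℝ} (hα : ContinuousAt α 0)
    (hβ : ContinuousAt β 0) (hγ : ContinuousAt γ 0) (hδ : ContinuousAt δ 0)
    (h₀ : ScaledHurwitz 0 (α 0) (β 0) (γ 0) (δ 0)) :
    ∃ κ > 0, ∀ᶠ x in 𝓝 0, 0 < x →
      ∀ z : ℂ, scaledQuartic x (α x) (β x) (γ x) (δ x) z = 0 → z.re ≤ -κ * x := by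
  -- the conditions for the coefficients shifted by `κ x`, which at `(κ, x) = 0` are `h₀`
  have hev : ∀ᶠ p : ℝ × ℝ in 𝓝 0, ScaledHurwitz p.2 (α p.2 - 4 * p.1)
      (β p.2 - 3 * α p.2 * p.1 * p.2 + 6 * p.1 ^ 2 * p.2)
      (γ p.2 - 2 * β p.2 * p.1 + 3 * α p.2 * p.1 ^ 2 * p.2 - 4 * p.1 ^ 3 * p.2)
      (δ p.2 - γ p.2 * p.1 + β p.2 * p.1 ^ 2 - α p.2 * p.1 ^ 3 * p.2 + p.1 ^ 4 * p.2) :=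
    eventually_scaledHurwitz (by fun_prop) (by fun_prop) (by fun_prop) (by fun_prop) (by fun_prop)
      (by simpa using h₀)
  rw [show (0 : ℝ × ℝ) = (0, 0) from rfl, nhds_prod_eq] at hev
  obtain ⟨κ, hκev, hκ⟩ :=
    ((hev.curry.filter_mono nhdsWithin_le_nhds).and (eventually_mem_nhdsWithin (s := Set.Ioi 0))).exists
  refine ⟨κ, hκ, hκev.mono fun x hx hx0 z hz => ?_⟩
  have := ScaledHurwitz.re_nonpos hx0 hx ((scaledQuartic_shift _ _ _ _ _ κ z).symm.trans hz)
  simp only [Complex.add_re, Complex.ofReal_re] at this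
  linarith

theorem spectral_dissipativity_general
    (β₁ β₂ β₃ β₄ σp σm νp νm : ℝ)
    (hβ₁ : 0 < β₁) (hβ₄ : 0 < β₄)
    (hσp : 0 < σp) (hσm : 0 < σm) (hνp : 0 < νp) (hνm : 0 < νm)
    (hβ : β₂ = β₃) (hββ : β₁ * β₄ = β₂ ^ 2) :
    ∃ η > 0, ∃ c > 0, ∀ r : ℝ, 0 < r → r ≤ η → ∀ lam : ℂ,
      (lam • (1 : Matrix (Fin 4) (Fin 4) ℂ)
          - (A1 β₁ β₂ β₃ β₄ σp σm νp νm r).map (Complex.ofReal)).det = 0 →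
      lam.re ≤ -c * r ^ 2 := by
  have hHurwitz : (νp + νm) * (β₁ + β₄) - (β₁ * νm + β₄ * νp) = β₁ * νp + β₄ * νm := by ring
  obtain ⟨κ, hκ, hev⟩ := exists_re_le_of_scaledQuartic_eq_zero
    (α := fun _ => νp + νm) (β := fun x => β₁ + β₄ + (σp + σm + νp * νm) * x)
    (γ := fun x => β₁ * νm + β₄ * νp + (σp * νm + σm * νp) * x)
    (δ := fun x => β₁ * σm + β₄ * σp + σp * σm * x) (by fun_prop) (by fun_prop) (by fun_prop)
    (by fun_prop) ⟨by positivity, by positivity, by positivity, by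
      simp only [mul_zero, add_zero, zero_mul, sub_zero, hHurwitz]
      positivity⟩
  obtain ⟨ε, hε, hball⟩ := Metric.eventually_nhds_iff.1
    (((continuous_pow 2).tendsto' (0 : ℝ) 0 (by norm_num)).eventually hev)
  refine ⟨ε / 2, by positivity, κ, hκ, fun r hr hrε lam hdet => hball ?_ (by positivity) lam ?_⟩
  · rw [Real.dist_0_eq_abs, abs_of_pos hr]
    linarith
  · rw [det_smul_one_sub_A1, hβ] at hdet
    have hββ' : (β₁ : ℂ) * β₄ = β₃ ^ 2 := by exact_mod_cast hβ ▸ hββ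
    simp only [scaledQuartic]
    push_cast
    linear_combination hdet - (r : ℂ) ^ 4 * hββ'

/-- Uniform strict spectral dissipativity of `A₁(r)` at low frequencies: there exist
`η > 0` and `c > 0` such that for `0 < r ≤ η`, every complex root `λ` of
`det(λI − A₁(r))` satisfies `Re λ ≤ −c r²`. -/
theorem spectral_dissipativity
    (β₁ β₂ β₃ β₄ σp σm νp νm : ℝ)
    (hβ₁ : 0 < β₁) (hβ₂ : 0 < β₂) (hβ₃ : 0 < β₃) (hβ₄ : 0 < β₄)
    (hσp : 0 < σp) (hσm : 0 < σm) (hνp : 0 < νp) (hνm : 0 < νm)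
    (hβ : β₂ = β₃) (hββ : β₁ * β₄ = β₂ ^ 2) :
    ∃ η > 0, ∃ c > 0, ∀ r : ℝ, 0 < r → r ≤ η → ∀ lam : ℂ,
      (lam • (1 : Matrix (Fin 4) (Fin 4) ℂ)
          - (A1 β₁ β₂ β₃ β₄ σp σm νp νm r).map (Complex.ofReal)).det = 0 →
      lam.re ≤ -c * r ^ 2 :=
  spectral_dissipativity_general β₁ β₂ β₃ β₄ σp σm νp νm hβ₁ hβ₄ hσp hσm hνp hνm hβ hββ
end
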